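/- Let S be an inverse monoid and let L(S) be the category with objects the idempotents of S, arrows (e, x) with xx⁻¹ ≤ e, domain (x⁻¹x, x⁻¹x), codomain (e,e), and composition (e,x)(f,y) = (e, xy) when x⁻¹x = f. Then L(S) is left cancellative, and it is right cancellative if and only if S is E-unitary. -/

import Mathlib

/-- An inverse monoid: a monoid with an inverse operation such that
`a * a⁻¹ * a = a`, `a⁻¹ * a * a⁻¹ = a⁻¹`, and idempotents commute. -/
class InverseMonoid (S : Type*) extends Monoid S, Inv S where
  mul_inv_mul : ∀ a : S, a * a⁻¹ * a = a
  inv_mul_inv : ∀ a : S, a⁻¹ * a * a⁻¹ = a⁻¹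
  idem_comm : ∀ e f : S, e * e = e → f * f = f → e * f = f * e

/-- The natural partial order on an inverse monoid. -/
def natLe {S : Type*} [InverseMonoid S] (a b : S) : Prop :=
  ∃ e : S, e * e = e ∧ a = b * e

/-!
Left cancellation holds because `y y⁻¹ ≤ x⁻¹x` gives `y = (x⁻¹x) y = x⁻¹(x y)`.

If `S` is E-unitary and `y x = z x` with `y⁻¹y = z⁻¹z ≥ x x⁻¹ =: e`, then `y z⁻¹` lies above the
idempotent `z e z⁻¹`, and `z y⁻¹` above `y e y⁻¹`; so both are idempotent, and
`y = (y z⁻¹) z`, `z = (z y⁻¹) y` force `y = z`. Conversely, if `e ≤ s` with `e` idempotent,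
then `s e = e = (s⁻¹s) e`: the arrows `(1, s)` and `(1, s⁻¹s)` agree after `(s⁻¹s, e)`, and right
cancellation makes `s = s⁻¹s` idempotent.
-/

namespace InverseMonoid

variable {S : Type*} [InverseMonoid S]

theorem isIdempotentElem_mul_of_mul_mul_eq {a b : S} (h : a * b * a = a) :
    IsIdempotentElem (a * b) := by
  rw [IsIdempotentElem, ← mul_assoc, h]

theorem isIdempotentElem_mul_inv (a : S) : IsIdempotentElem (a * a⁻¹) :=
  isIdempotentElem_mul_of_mul_mul_eq (mul_inv_mul a)

theorem isIdempotentElem_inv_mul (a : S) : IsIdempotentElem (a⁻¹ * a) :=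
  isIdempotentElem_mul_of_mul_mul_eq (inv_mul_inv a)

theorem mul_comm_of_isIdempotentElem {e f : S} (he : IsIdempotentElem e)
    (hf : IsIdempotentElem f) : e * f = f * e :=
  idem_comm e f he hf

protected theorem inv_unique {a b c : S} (hab : a * b * a = a) (hba : b * a * b = b)
    (hac : a * c * a = a) (hca : c * a * c = c) : b = c := by
  have hb : b = c * a * b := calc
    b = b * a * c * a * b := by
      rw [show b * a * c * a * b = b * (a * c * a) * b by simp only [mul_assoc], hac, hba]
    _ = (b * a) * (c * a) * b := by simp only [mul_assoc]
    _ = (c * a) * (b * a) * b := by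
      rw [mul_comm_of_isIdempotentElem (isIdempotentElem_mul_of_mul_mul_eq hba)
        (isIdempotentElem_mul_of_mul_mul_eq hca)]
    _ = c * a * b := by simp only [mul_assoc]; rw [← mul_assoc b a b, hba]
  have hc : c = c * a * b := calc
    c = c * a * b * a * c := by
      rw [show c * a * b * a * c = c * (a * b * a) * c by simp only [mul_assoc], hab, hca]
    _ = c * ((a * b) * (a * c)) := by simp only [mul_assoc]
    _ = c * ((a * c) * (a * b)) := by
      rw [mul_comm_of_isIdempotentElem (isIdempotentElem_mul_of_mul_mul_eq hab)
        (isIdempotentElem_mul_of_mul_mul_eq hac)]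
    _ = c * a * b := by rw [← mul_assoc, ← mul_assoc, ← mul_assoc c a c, hca]
  exact hb.trans hc.symm

theorem inv_eq_self_of_isIdempotentElem {e : S} (he : IsIdempotentElem e) : e⁻¹ = e :=
  InverseMonoid.inv_unique (mul_inv_mul e) (inv_mul_inv e)
    (by rw [he.eq, he.eq]) (by rw [he.eq, he.eq])

protected theorem mul_inv_rev (a b : S) : (a * b)⁻¹ = b⁻¹ * a⁻¹ := by
  have hcomm := mul_comm_of_isIdempotentElem (isIdempotentElem_mul_inv b)
    (isIdempotentElem_inv_mul a)
  refine InverseMonoid.inv_unique (mul_inv_mul _) (inv_mul_inv _) ?_ ?_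
  · calc a * b * (b⁻¹ * a⁻¹) * (a * b) = a * ((b * b⁻¹) * (a⁻¹ * a)) * b := by
          simp only [mul_assoc]
      _ = (a * a⁻¹ * a) * (b * b⁻¹ * b) := by rw [hcomm]; simp only [mul_assoc]
      _ = a * b := by rw [mul_inv_mul, mul_inv_mul]
  · calc b⁻¹ * a⁻¹ * (a * b) * (b⁻¹ * a⁻¹) = b⁻¹ * ((a⁻¹ * a) * (b * b⁻¹)) * a⁻¹ := by
          simp only [mul_assoc]
      _ = (b⁻¹ * b * b⁻¹) * (a⁻¹ * a * a⁻¹) := by rw [← hcomm]; simp only [mul_assoc]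
      _ = b⁻¹ * a⁻¹ := by rw [inv_mul_inv, inv_mul_inv]

theorem natLe_one_of_isIdempotentElem {e : S} (he : IsIdempotentElem e) : natLe e 1 :=
  ⟨e, he, (one_mul e).symm⟩

theorem mul_inv_mul_of_natLe {a b : S} (h : natLe a b) : a * (b⁻¹ * b) = a := by
  obtain ⟨f, hf, rfl⟩ := h
  rw [mul_assoc, mul_comm_of_isIdempotentElem hf (isIdempotentElem_inv_mul b), ← mul_assoc,
    ← mul_assoc, mul_inv_mul]

theorem mul_eq_self_of_natLe {a g : S} (hg : IsIdempotentElem g) (h : natLe a g) : g * a = a := by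
  obtain ⟨f, -, rfl⟩ := h
  rw [← mul_assoc, hg.eq]

theorem mul_eq_self_of_natLe_mul_inv {y g : S} (hg : IsIdempotentElem g) (h : natLe (y * y⁻¹) g) :
    g * y = y := by
  conv_lhs => rw [← mul_inv_mul y, ← mul_assoc, mul_eq_self_of_natLe hg h]
  exact mul_inv_mul y

theorem mul_eq_of_isIdempotentElem_natLe {e s : S} (he : IsIdempotentElem e) (h : natLe e s) :
    s * e = e := by
  obtain ⟨f, hf, hef⟩ := h
  have he_inv : f * s⁻¹ = e := by
    rw [← inv_eq_self_of_isIdempotentElem hf, ← InverseMonoid.mul_inv_rev, ← hef,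
      inv_eq_self_of_isIdempotentElem he]
  calc s * e = s * (f * f) * s⁻¹ := by rw [hf, mul_assoc, he_inv]
    _ = s * f * (f * s⁻¹) := by simp only [mul_assoc]
    _ = e := by rw [← hef, he_inv, he.eq]

theorem inv_mul_mul_eq_of_isIdempotentElem_natLe {e s : S} (he : IsIdempotentElem e)
    (h : natLe e s) : s⁻¹ * s * e = e := by
  rw [← mul_comm_of_isIdempotentElem he (isIdempotentElem_inv_mul s), mul_inv_mul_of_natLe h]

theorem eq_of_mul_eq_mul_left {f x y z : S} (hf : IsIdempotentElem f) (hxf : x⁻¹ * x = f)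
    (hyf : natLe (y * y⁻¹) f) (hzf : natLe (z * z⁻¹) f) (h : x * y = x * z) : y = z := calc
  y = f * y := (mul_eq_self_of_natLe_mul_inv hf hyf).symm
  _ = x⁻¹ * (x * y) := by rw [← hxf, mul_assoc]
  _ = x⁻¹ * (x * z) := by rw [h]
  _ = z := by rw [← mul_assoc, hxf, mul_eq_self_of_natLe_mul_inv hf hzf]

variable (S) in
def IsEUnitary : Prop :=
  ∀ e s : S, IsIdempotentElem e → natLe e s → IsIdempotentElem s

theorem isIdempotentElem_conj {e : S} (he : IsIdempotentElem e) (z : S) :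
    IsIdempotentElem (z * e * z⁻¹) := by
  rw [IsIdempotentElem]
  calc z * e * z⁻¹ * (z * e * z⁻¹) = z * (e * (z⁻¹ * z) * e) * z⁻¹ := by simp only [mul_assoc]
    _ = (z * z⁻¹ * z) * (e * e) * z⁻¹ := by
      rw [mul_comm_of_isIdempotentElem he (isIdempotentElem_inv_mul z)]; simp only [mul_assoc]
    _ = z * e * z⁻¹ := by rw [mul_inv_mul, he.eq]

theorem isIdempotentElem_mul_inv_of_mul_eq_mul {e y z : S} (hS : IsEUnitary S)
    (he : IsIdempotentElem e) (hze : z⁻¹ * z * e = e) (h : y * e = z * e) :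
    IsIdempotentElem (y * z⁻¹) := by
  refine hS _ _ (isIdempotentElem_conj he z) ⟨_, isIdempotentElem_conj he z, ?_⟩
  calc z * e * z⁻¹ = y * (z⁻¹ * z * e) * z⁻¹ := by rw [hze, h]
    _ = y * z⁻¹ * (z * e * z⁻¹) := by simp only [mul_assoc]

theorem eq_of_eq_mul_of_eq_mul {p q y z : S} (hp : IsIdempotentElem p) (hq : IsIdempotentElem q)
    (hy : y = p * z) (hz : z = q * y) : y = z := by
  have hqy : q * y = y := calc
    q * y = q * (p * (q * y)) := by rw [← hz, ← hy, ← hz]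
    _ = p * (q * y) := by
      rw [← mul_assoc, ← mul_assoc, mul_comm_of_isIdempotentElem hq hp, mul_assoc p, hq.eq,
        mul_assoc]
    _ = y := by rw [← hz, ← hy]
  rw [hz, hqy]

theorem eq_of_mul_eq_mul_of_isEUnitary {e y z : S} (hS : IsEUnitary S) (he : IsIdempotentElem e)
    (hye : y⁻¹ * y * e = e) (hze : z⁻¹ * z * e = e) (hyz : y⁻¹ * y = z⁻¹ * z)
    (h : y * e = z * e) : y = z := by
  refine eq_of_eq_mul_of_eq_mul (isIdempotentElem_mul_inv_of_mul_eq_mul hS he hze h)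
    (isIdempotentElem_mul_inv_of_mul_eq_mul hS he hye h.symm) ?_ ?_
  · rw [mul_assoc, ← hyz, ← mul_assoc, mul_inv_mul]
  · rw [mul_assoc, hyz, ← mul_assoc, mul_inv_mul]

end InverseMonoid

open InverseMonoid

/-- The arrows of the category `L(S)` are pairs `(e, x)` with `e` idempotent and
`x * x⁻¹ ≤ e`; `(e, x) ∘ (f, y) = (e, x * y)` is defined when `x⁻¹ * x = f`. -/
theorem stmt19 {S : Type*} [InverseMonoid S] :
    (∀ e f x y z : S, e * e = e → f * f = f →
        natLe (x * x⁻¹) e → x⁻¹ * x = f →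
        natLe (y * y⁻¹) f → natLe (z * z⁻¹) f →
        x * y = x * z → y = z) ∧
    ((∀ f g x y z : S, f * f = f → g * g = g →
        natLe (y * y⁻¹) f → natLe (z * z⁻¹) f →
        natLe (x * x⁻¹) g → y⁻¹ * y = g → z⁻¹ * z = g →
        y * x = z * x → y = z) ↔
      (∀ e s : S, e * e = e → natLe e s → s * s = s)) := by
  refine ⟨fun e f x y z _ hf _ hxf hyf hzf h => eq_of_mul_eq_mul_left hf hxf hyf hzf h,
    fun hRC e s he hes => ?_, fun hS f g x y z _ hg _ _ hxg hyg hzg h => ?_⟩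
  · have hsi := isIdempotentElem_inv_mul s
    have hse : s * e = s⁻¹ * s * e := by
      rw [mul_eq_of_isIdempotentElem_natLe he hes, inv_mul_mul_eq_of_isIdempotentElem_natLe he hes]
    have hs : s = s⁻¹ * s := hRC 1 (s⁻¹ * s) e s (s⁻¹ * s) (one_mul 1) hsi
      (natLe_one_of_isIdempotentElem (isIdempotentElem_mul_inv s))
      (natLe_one_of_isIdempotentElem (isIdempotentElem_mul_inv (s⁻¹ * s)))
      ⟨e, he, by rw [inv_eq_self_of_isIdempotentElem he, he,
        inv_mul_mul_eq_of_isIdempotentElem_natLe he hes]⟩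
      rfl (by rw [inv_eq_self_of_isIdempotentElem hsi, hsi.eq]) hse
    rw [hs]
    exact hsi
  · have hge : g * (x * x⁻¹) = x * x⁻¹ := mul_eq_self_of_natLe hg hxg
    exact eq_of_mul_eq_mul_of_isEUnitary hS (isIdempotentElem_mul_inv x) (by rw [hyg, hge])
      (by rw [hzg, hge]) (hyg.trans hzg.symm) (by rw [← mul_assoc, h, mul_assoc])
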